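/- Every derivation of the evolution algebra E_n is a singular linear map (not invertible), and every derivation of I_n is singular. -/
import Mathlib


/-- The evolution algebra `E_n` on `Fin (n+2) → F`: `eᵢ² = e₀`, `eᵢeⱼ = 0` (`i ≠ j`). -/
def enMul {F : Type*} [Field F] {n : ℕ} (x y : Fin (n + 2) → F) : Fin (n + 2) → F :=
  fun k => if k = 0 then ∑ i, x i * y i else 0

/-- The evolution algebra `I_n` on `Fin (n+2) → F`: `eₖ² = e₀ + I·e₁` (`I² = -1`),
`eₖeₗ = 0` (`k ≠ l`). -/
def inMul {F : Type*} [Field F] {n : ℕ} (I : F) (x y : Fin (n + 2) → F) :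
    Fin (n + 2) → F :=
  fun k => if k = 0 then ∑ i, x i * y i
    else if k = 1 then I * ∑ i, x i * y i else 0

/-- **Every derivation of `E_n` and of `I_n` is singular** (not bijective). -/
theorem stmt_11 (F : Type*) [Field F] [IsAlgClosed F] [CharZero F]
    (I : F) (hI : I ^ 2 = -1) (n : ℕ) :
    (∀ D : (Fin (n + 2) → F) →ₗ[F] (Fin (n + 2) → F),
      (∀ x y, D (enMul x y) = enMul (D x) y + enMul x (D y)) →
      ¬ Function.Bijective D) ∧
    (∀ D : (Fin (n + 2) → F) →ₗ[F] (Fin (n + 2) → F),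
      (∀ x y, D (inMul I x y) = inMul I (D x) y + inMul I x (D y)) →
      ¬ Function.Bijective D) := by
  -- basis vector e₀
  set u : Fin (n + 2) → F := fun k => if k = 0 then 1 else 0 with hu
  have hsum_u : ∀ x : Fin (n + 2) → F, (∑ i, x i * u i) = x 0 := by
    intro x
    simp [hu, mul_ite, Finset.sum_ite_eq']
  have hsum_u' : ∀ x : Fin (n + 2) → F, (∑ i, u i * x i) = x 0 := by
    intro x
    simp [hu, ite_mul, Finset.sum_ite_eq']
  constructor
  · intro D hD h
    have huu : enMul u u = u := by
      funext k
      simp only [enMul]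
      by_cases hk : k = 0
      · simp [hk, hsum_u, hu]
      · simp [hk, hu]
    have key := hD u u
    rw [huu] at key
    -- coordinate 0
    have h0 := congrFun key 0
    simp only [enMul, Pi.add_apply, if_pos rfl, hsum_u, hsum_u', if_true] at h0
    have hDu0 : D u 0 = 0 := by linear_combination -h0
    have hDu : D u = 0 := by
      funext k
      have hk := congrFun key k
      simp only [enMul, Pi.add_apply, hsum_u, hsum_u', hDu0] at hk
      simpa using hk
    have : u = 0 := by
      apply h.injective
      rw [hDu, map_zero]
    have := congrFun this 0
    simp [hu] at this
  · intro D hD h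
    -- w = e₀ + I e₁
    set w : Fin (n + 2) → F := fun k => if k = 0 then 1 else if k = 1 then I else 0
      with hw
    have hsum_w : ∀ x : Fin (n + 2) → F,
        (∑ i, w i * x i) = x 0 + I * x 1 := by
      intro x
      have : ∀ i : Fin (n + 2), w i * x i =
          (if i = 0 then x 0 else 0) + (if i = 1 then I * x 1 else 0) := by
        intro i
        by_cases h0 : i = 0
        · subst h0; simp [hw]
        · by_cases h1 : i = 1
          · subst h1; simp [hw]
          · simp [hw, h0, h1]
      rw [Finset.sum_congr rfl fun i _ => this i, Finset.sum_add_distrib]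
      simp [Finset.sum_ite_eq']
    have hmul : ∀ y x : Fin (n + 2) → F, inMul I y x = (∑ i, y i * x i) • w := by
      intro y x
      funext k
      simp only [inMul, Pi.smul_apply, smul_eq_mul, hw]
      by_cases h0 : k = 0
      · simp [h0]
      · by_cases h1 : k = 1
        · simp [h0, h1, mul_comm]
        · simp [h0, h1]
    -- derivation identity specialised, using inMul y x = ⟨y,x⟩ • w
    have key : ∀ x, (∑ i, w i * x i) • D w =
        ((∑ i, D w i * x i) + (∑ i, w i * D x i)) • w := by
      intro x
      have := hD w x
      rw [hmul w x, hmul (D w) x, hmul w (D x), map_smul, ← add_smul] at this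
      exact this
    -- with x = u : coefficient of w in D w
    have hwu : (∑ i, w i * u i) = 1 := by
      rw [hsum_w]; simp [hu]
    have hDw : D w = ((∑ i, D w i * u i) + (∑ i, w i * D u i)) • w := by
      have := key u
      rwa [hwu, one_smul] at this
    set c : F := (∑ i, D w i * u i) + (∑ i, w i * D u i) with hc
    -- for all x : ∑ wᵢ (Dx)ᵢ = 0
    have hker : ∀ x, (∑ i, w i * D x i) = 0 := by
      intro x
      have hk := key x
      have hDwx : (∑ i, (c • w) i * x i) = c * ∑ i, w i * x i := by
        simp only [Pi.smul_apply, smul_eq_mul, Finset.mul_sum, mul_assoc]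
      rw [hDw, hDwx, smul_smul] at hk
      have h0 := congrFun hk 0
      have hw0 : w 0 = 1 := by simp [hw]
      simp only [Pi.smul_apply, smul_eq_mul, hw0, mul_one] at h0
      linear_combination -h0
    obtain ⟨x, hx⟩ := h.surjective u
    have := hker x
    rw [hx, hwu] at this
    exact one_ne_zero this
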